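/- (Nested condensation compatibility) Let A be an n×n matrix with n ≥ 4 and let D = (d_{i,j})_{1≤i,j≤n-1} with d_{i,j} = a_{1,1}a_{i+1,j+1} − a_{1,j+1}a_{i+1,1}. Then the condensation of the leading principal (n-1)×(n-1) submatrix of A equals the leading principal (n-2)×(n-2) submatrix of D; consequently (a_{1,1})^{n-3} · det(A restricted to rows/columns 1..n-1) = det(D restricted to rows/columns 1..n-2). -/

import Mathlib

/-!
Multiplied by an extra factor `a₀₀` on both sides, Chiò's identity `a₀₀ ^ m * det B = det D`
is elementary: scaling rows `1, …, m + 1` of `B` by `a₀₀` and then clearing the first column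
with row `0` produces a matrix whose first column is `(a₀₀, 0, …, 0)` and whose lower-right
block is `D`. The factor is cancelled for the generic matrix over `ℤ[Xᵢⱼ]`, a domain in which
`X₀₀ ≠ 0`, and the identity then specialises to any commutative ring. Condensation only involves
row and column `0`, so condensing a leading principal submatrix is truncating the condensed
matrix.
-/

open Matrix

namespace Matrix

variable {R S : Type*} [CommRing R] [CommRing S] {m : ℕ}

def chioCondensation (B : Matrix (Fin (m + 2)) (Fin (m + 2)) R) :
    Matrix (Fin (m + 1)) (Fin (m + 1)) R :=
  of fun i j => B 0 0 * B i.succ j.succ - B 0 j.succ * B i.succ 0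

@[simp]
lemma chioCondensation_apply (B : Matrix (Fin (m + 2)) (Fin (m + 2)) R) (i j : Fin (m + 1)) :
    B.chioCondensation i j = B 0 0 * B i.succ j.succ - B 0 j.succ * B i.succ 0 :=
  rfl

lemma chioCondensation_map (f : R →+* S) (B : Matrix (Fin (m + 2)) (Fin (m + 2)) R) :
    (B.map f).chioCondensation = B.chioCondensation.map f := by
  ext i j
  simp

lemma chioCondensation_submatrix_castSucc (B : Matrix (Fin (m + 3)) (Fin (m + 3)) R) :
    (B.submatrix Fin.castSucc Fin.castSucc).chioCondensation =
      B.chioCondensation.submatrix Fin.castSucc Fin.castSucc := by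
  ext i j
  simp

lemma pivot_mul_pow_mul_det_eq (B : Matrix (Fin (m + 2)) (Fin (m + 2)) R) :
    B 0 0 * (B 0 0 ^ m * B.det) = B 0 0 * B.chioCondensation.det := by
  let scale : Fin (m + 2) → R := fun i => if i = 0 then 1 else B 0 0
  let cleared : Matrix (Fin (m + 2)) (Fin (m + 2)) R :=
    of fun i j => if i = 0 then B 0 j else B 0 0 * B i j - B i 0 * B 0 j
  have h_scale : (of fun i j => scale i * B i j).det = B 0 0 ^ (m + 1) * B.det := by
    rw [det_mul_column, Fin.prod_univ_succ]
    simp [scale, Fin.succ_ne_zero]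
  have h_clear : cleared.det = (of fun i j => scale i * B i j).det := by
    refine det_eq_of_forall_row_eq_smul_add_const (fun i => if i = 0 then 0 else -B i 0) 0
      (if_pos rfl) fun i j => ?_
    by_cases hi : i = 0
    · simp [cleared, scale, hi]
    · simp [cleared, scale, hi]
      ring
  have h_block : cleared.submatrix Fin.succ Fin.succ = B.chioCondensation := by
    ext i j
    simp [cleared, Fin.succ_ne_zero]
    ring
  have h_expand : cleared.det = B 0 0 * B.chioCondensation.det := by
    rw [det_succ_column_zero, Fin.sum_univ_succ, Fin.succAbove_zero, h_block,
      Finset.sum_eq_zero fun i _ => by simp [cleared, Fin.succ_ne_zero, mul_comm]]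
    simp [cleared]
  rw [← mul_assoc, ← pow_succ', ← h_scale, ← h_clear, h_expand]

theorem pow_mul_det_eq_det_chioCondensation (B : Matrix (Fin (m + 2)) (Fin (m + 2)) R) :
    B 0 0 ^ m * B.det = B.chioCondensation.det := by
  let X := mvPolynomialX (Fin (m + 2)) (Fin (m + 2)) ℤ
  have h_generic : X 0 0 ^ m * X.det = X.chioCondensation.det :=
    mul_left_cancel₀ (MvPolynomial.X_ne_zero _) (pivot_mul_pow_mul_det_eq X)
  have h_spec : X.map (MvPolynomial.eval₂ (Int.castRingHom R) fun p => B p.1 p.2) = B :=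
    mvPolynomialX_map_eval₂ _ B
  have h_mapped :=
    congrArg (MvPolynomial.eval₂Hom (Int.castRingHom R) fun p => B p.1 p.2) h_generic
  rw [map_mul, map_pow, RingHom.map_det, RingHom.map_det, RingHom.mapMatrix_apply,
    RingHom.mapMatrix_apply, ← chioCondensation_map, MvPolynomial.coe_eval₂Hom, h_spec] at h_mapped
  simpa [X] using h_mapped

end Matrix

/-- Nested condensation compatibility: condensing a leading principal submatrix equals
truncating the condensed matrix, and the condensation identity at size `n - 1`. -/
theorem chio_condensation_nested
    {R : Type*} [CommRing R] (n : ℕ)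
    (A : Matrix (Fin (n + 4)) (Fin (n + 4)) R) :
    (∀ i j : Fin (n + 2),
      (A.submatrix Fin.castSucc Fin.castSucc) 0 0 *
            (A.submatrix Fin.castSucc Fin.castSucc) i.succ j.succ -
          (A.submatrix Fin.castSucc Fin.castSucc) 0 j.succ *
            (A.submatrix Fin.castSucc Fin.castSucc) i.succ 0 =
        (fun i' j' : Fin (n + 3) =>
          A 0 0 * A i'.succ j'.succ - A 0 j'.succ * A i'.succ 0) i.castSucc j.castSucc) ∧
    (A 0 0) ^ (n + 1) * (A.submatrix Fin.castSucc Fin.castSucc).det =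
      Matrix.det fun i j : Fin (n + 2) =>
        (fun i' j' : Fin (n + 3) =>
          A 0 0 * A i'.succ j'.succ - A 0 j'.succ * A i'.succ 0) i.castSucc j.castSucc := by
  have h_nested := A.chioCondensation_submatrix_castSucc
  refine ⟨fun i j => congrFun (congrFun h_nested i) j, ?_⟩
  have h_chio := pow_mul_det_eq_det_chioCondensation (A.submatrix Fin.castSucc Fin.castSucc)
  rw [h_nested] at h_chio
  exact h_chio
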